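/- Let R be a commutative Noetherian ring and let (M_i)_{i ∈ ι} be a family of R-modules such that each M_i is flat and cotorsion. Then the product ∏_{i ∈ ι} M_i is a flat and cotorsion R-module. -/

import Mathlib

universe u

open CategoryTheory Limits

/-- Vanishing of (Yoneda) `Ext¹(A, B)` in an abelian category: every short exact
sequence `0 → B → E → A → 0` splits. -/
def Ext1Vanishes {C : Type*} [Category C] [Abelian C] (A B : C) : Prop :=
  ∀ (E : C) (f : B ⟶ E) (g : E ⟶ A) (w : f ≫ g = 0),
    (ShortComplex.mk f g w).ShortExact → ∃ s : A ⟶ E, s ≫ g = 𝟙 A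

/-- An `R`-module `M` is cotorsion if `Ext¹_R(F, M) = 0` for every flat `R`-module `F`. -/
def IsCotorsion (R : Type u) [CommRing R] (M : Type u) [AddCommGroup M] [Module R M] : Prop :=
  ∀ F : ModuleCat.{u} R, Module.Flat R F → Ext1Vanishes F (ModuleCat.of R M)

/-!
Flatness: by the equational criterion, a relation `∑ fᵢ xᵢ = 0` in a flat module is a
combination of syzygies of `f`. Over a Noetherian ring the syzygies of `f` are generated by one
finite set, which therefore serves every factor at once, so the componentwise witnesses assemble
into a witness in the product.

Cotorsion: if `Ext¹(A, B) = 0`, pushing an extension of `A` out along `φ : X ⟶ B` shows that `φ`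
extends along the inclusion `X ⟶ E`. Extending the projections of a product componentwise
yields a retraction, hence a splitting.
-/

namespace Module

variable {R M : Type*} [CommRing R] [AddCommGroup M] [Module R M] {ι : Type*} [Fintype ι]
  {f : ι → R} {x : ι → M}

theorem isTrivialRelation_of_eq_sum_smul {s : Finset (ι → R)}
    (hs : ∀ a ∈ s, ∑ i, f i * a i = 0) (z : (ι → R) → M) (hx : ∀ i, x i = ∑ a ∈ s, a i • z a) :
    IsTrivialRelation f x := by
  let e := s.equivFin.symm
  refine ⟨s.card, fun i j => (e j : ι → R) i, fun j => z (e j), fun i => ?_, fun j => hs _ (e j).2⟩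
  rw [hx i, ← s.sum_coe_sort]
  exact (e.sum_comp fun a : s => (a : ι → R) i • z a).symm

theorem Flat.exists_eq_sum_smul_of_sum_smul_eq_zero [Flat R M] (hx : ∑ i, f i • x i = 0)
    {s : Finset (ι → R)} (hs : LinearMap.ker (Fintype.linearCombination R f) ≤ Submodule.span R s) :
    ∃ z : (ι → R) → M, ∀ i, x i = ∑ a ∈ s, a i • z a := by
  obtain ⟨k, a, y, hxy, ha⟩ := Flat.isTrivialRelation_of_sum_smul_eq_zero hx
  have hker : ∀ j, (fun i => a i j) ∈ LinearMap.ker (Fintype.linearCombination R f) := fun j => by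
    simpa [Fintype.linearCombination_apply, mul_comm] using ha j
  choose c _ hc using fun j => Submodule.mem_span_finset.mp (hs (hker j))
  refine ⟨fun g => ∑ j, c j g • y j, fun i => ?_⟩
  have hai : ∀ j, a i j = ∑ g ∈ s, c j g * g i := fun j => by
    simpa using (congrFun (hc j) i).symm
  simp_rw [hxy i, hai, Finset.sum_smul, Finset.smul_sum, smul_smul, mul_comm]
  exact Finset.sum_comm

instance Flat.pi [IsNoetherianRing R] {ι : Type*} {M : ι → Type*} [∀ i, AddCommGroup (M i)]
    [∀ i, Module R (M i)] [∀ i, Flat R (M i)] : Flat R (∀ i, M i) := by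
  refine Flat.of_forall_isTrivialRelation fun {l f x} hx => ?_
  obtain ⟨s, hs⟩ := IsNoetherian.noetherian (LinearMap.ker (Fintype.linearCombination R f))
  have hxj : ∀ j, ∑ i, f i • x i j = 0 := fun j => by simpa using congrFun hx j
  choose z hz using fun j => Flat.exists_eq_sum_smul_of_sum_smul_eq_zero (hxj j) hs.ge
  refine isTrivialRelation_of_eq_sum_smul (fun a ha => ?_) (fun a j => z j a)
    fun i => funext fun j => by simpa using hz j i
  have : a ∈ LinearMap.ker (Fintype.linearCombination R f) := hs ▸ Submodule.subset_span ha
  simpa [Fintype.linearCombination_apply, mul_comm] using this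

end Module

namespace CategoryTheory

variable {C : Type*} [Category C] [Abelian C]

lemma ShortComplex.ShortExact.pushout {X Y A B : C} {f : X ⟶ Y} {g : Y ⟶ A} {w : f ≫ g = 0}
    (hS : (ShortComplex.mk f g w).ShortExact) (φ : X ⟶ B) :
    (ShortComplex.mk (pushout.inr f φ) (pushout.desc g 0 (by simp [w]))
      (pushout.inr_desc _ _ _)).ShortExact := by
  have := hS.mono_f
  have := hS.epi_g
  refine .mk' ?_ inferInstance (epi_of_epi_fac (pushout.inl_desc g 0 _))
  rw [ShortComplex.exact_iff_exact_up_to_refinements]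
  intro T p hp
  obtain ⟨T', π, _, y, b, hπ⟩ := (IsPushout.of_hasPushout f φ).hom_eq_add_up_to_refinements p
  have hy : y ≫ g = 0 := by
    simpa [reassoc_of% hπ, pushout.inl_desc, pushout.inr_desc] using π ≫= hp
  obtain ⟨T'', π', _, x, hx⟩ := hS.exact.exact_up_to_refinements y hy
  refine ⟨T'', π' ≫ π, inferInstance, x ≫ φ + π' ≫ b, ?_⟩
  simp only [Category.assoc, hπ, Preadditive.comp_add, Preadditive.add_comp, reassoc_of% hx]
  simp [pushout.condition]

lemma Ext1Vanishes.exists_comp_eq_of_shortExact {A B X Y : C} (h : Ext1Vanishes A B)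
    {f : X ⟶ Y} {g : Y ⟶ A} {w : f ≫ g = 0} (hS : (ShortComplex.mk f g w).ShortExact)
    (φ : X ⟶ B) : ∃ ψ : Y ⟶ B, f ≫ ψ = φ := by
  have hP := hS.pushout φ
  obtain ⟨s, hs⟩ := h _ _ _ _ hP
  let split := ShortComplex.Splitting.ofExactOfSection _ hP.exact s hs hP.mono_f
  exact ⟨pushout.inl f φ ≫ split.r, by rw [pushout.condition_assoc, split.f_r, Category.comp_id]⟩

lemma Ext1Vanishes.of_isLimit {A : C} {J : Type*} {B : J → C} {c : Fan B} (hc : IsLimit c)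
    (h : ∀ j, Ext1Vanishes A (B j)) : Ext1Vanishes A c.pt := by
  intro E f g w hS
  choose ψ hψ using fun j => (h j).exists_comp_eq_of_shortExact hS (c.proj j)
  have hr : f ≫ Fan.IsLimit.lift hc ψ = 𝟙 c.pt :=
    Fan.IsLimit.hom_ext hc _ _ fun j => by simp [hψ]
  exact ⟨_, (ShortComplex.Splitting.ofExactOfRetraction _ hS.exact _ hr hS.epi_g).s_g⟩

end CategoryTheory

theorem IsCotorsion.pi {R : Type u} [CommRing R] {ι : Type u} {M : ι → Type u}
    [∀ i, AddCommGroup (M i)] [∀ i, Module R (M i)] (h : ∀ i, IsCotorsion R (M i)) :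
    IsCotorsion R (∀ i, M i) := fun F hF =>
  Ext1Vanishes.of_isLimit (ModuleCat.productConeIsLimit fun i => ModuleCat.of R (M i))
    fun i => h i F hF

theorem flat_and_cotorsion_pi (R : Type u) [CommRing R] [IsNoetherianRing R]
    (ι : Type u) (M : ι → Type u) [∀ i, AddCommGroup (M i)] [∀ i, Module R (M i)]
    (hflat : ∀ i, Module.Flat R (M i)) (hcot : ∀ i, IsCotorsion R (M i)) :
    Module.Flat R (∀ i, M i) ∧ IsCotorsion R (∀ i, M i) :=
  have := hflat
  ⟨inferInstance, IsCotorsion.pi hcot⟩
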